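/- arXiv:1206.4025 — 3 statements merged into one kernel-verified Lean document; each statement's English description precedes it below -/
import Mathlib

section
/- There exists a universal constant C > 0 such that for every integer d ≥ 1 and every real t > 0, the d×d matrix L(t) with entries L(t)_{i,j} = λ([i-1,i) ∩ [(j-1)t², jt²)) and the unit vector z ∈ ℝ^d with z_i = Z_d^{-1/2} i^{-1/2} satisfy ⟨z, L(t) z⟩ ≥ t (1 - C · ln(1 + max(t, t⁻¹)) / (1 + ln d)). -/
open MeasureTheory

noncomputable def Lmat (d : ℕ) (t : ℝ) : Matrix (Fin d) (Fin d) ℝ :=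
  fun i j => (volume (Set.Ico (i : ℝ) ((i : ℝ) + 1) ∩
    Set.Ico ((j : ℝ) * t ^ 2) (((j : ℝ) + 1) * t ^ 2))).toReal

/-- The harmonic number `Z_d = ∑_{i=1}^d 1/i`. -/
noncomputable def Zd (d : ℕ) : ℝ := ∑ i ∈ Finset.range d, ((i : ℝ) + 1)⁻¹

/-- The unit vector `z` with `z_i = Z_d^{-1/2} i^{-1/2}` (0-based index `i` stands for `i+1`). -/
noncomputable def zvec (d : ℕ) (i : Fin d) : ℝ :=
  (Real.sqrt (Zd d))⁻¹ * (Real.sqrt ((i : ℝ) + 1))⁻¹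

/-! On the support of row `i` of `L(t)` one has `(j + 1) t² < i + 1 + t²`, hence
`z_j ≥ t Z_d^{-1/2} (i + 1 + t²)^{-1/2}`. Since also `z_i ≥ Z_d^{-1/2} (i + 1 + t²)^{-1/2}` and
the rows with `i + 1 ≤ d t²` sum to `1`, the form is at least `(t / Z_d) ∑_{i < k} (i + 1 + t²)⁻¹`
with `k = min d ⌊d t²⌋`. Telescoping `log (1 + 1/x) ≤ 1/x`, this sum is at least
`log ((k + 1 + t²) / (1 + t²)) ≥ log d - log 2 - 2 log (max t t⁻¹)`, and `Z_d ≤ 1 + log d`. -/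

open Finset

/-- The length of `[a, a + 1) ∩ (-∞, x)`. -/
noncomputable def unitOverlap (a x : ℝ) : ℝ := min 1 (max 0 (x - a))

lemma unitOverlap_nonneg (a x : ℝ) : 0 ≤ unitOverlap a x :=
  le_min zero_le_one (le_max_left _ _)

lemma unitOverlap_of_le {a x : ℝ} (h : a + 1 ≤ x) : unitOverlap a x = 1 :=
  min_eq_left (le_max_of_le_right (by linarith))

lemma unitOverlap_of_le_left {a x : ℝ} (h : x ≤ a) : unitOverlap a x = 0 := by
  simp [unitOverlap, h]

lemma max_min_sub_max_eq_unitOverlap_sub {a c e : ℝ} (h : c ≤ e) :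
    max (min (a + 1) e - max a c) 0 = unitOverlap a e - unitOverlap a c := by
  unfold unitOverlap
  rcases le_total (a + 1) e with h1 | h1 <;> rcases le_total a c with h2 | h2 <;>
    simp [min_def, max_def] <;> split_ifs <;> linarith

lemma Lmat_apply (d : ℕ) (t : ℝ) (i j : Fin d) :
    Lmat d t i j = unitOverlap i ((j + 1) * t ^ 2) - unitOverlap i (j * t ^ 2) := by
  rw [Lmat, Set.Ico_inter_Ico, Real.volume_Ico, ENNReal.toReal_ofReal']
  exact max_min_sub_max_eq_unitOverlap_sub (by nlinarith [sq_nonneg t])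

lemma Lmat_nonneg (d : ℕ) (t : ℝ) (i j : Fin d) : 0 ≤ Lmat d t i j :=
  ENNReal.toReal_nonneg

lemma Lmat_eq_zero_of_le {d : ℕ} {t : ℝ} {i j : Fin d} (h : (i : ℝ) + 1 ≤ j * t ^ 2) :
    Lmat d t i j = 0 := by
  rw [Lmat_apply, unitOverlap_of_le h, unitOverlap_of_le (by nlinarith [sq_nonneg t]), sub_self]

lemma sum_Lmat_row (d : ℕ) (t : ℝ) (i : Fin d) :
    ∑ j, Lmat d t i j = unitOverlap i (d * t ^ 2) := by
  let f : ℕ → ℝ := fun n => unitOverlap i (n * t ^ 2)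
  have hf : ∀ j : Fin d, Lmat d t i j = f (j + 1) - f j := fun j => by
    simp only [Lmat_apply, f, Nat.cast_add, Nat.cast_one]
  rw [sum_congr rfl fun j _ => hf j, Fin.sum_univ_eq_sum_range (fun j => f (j + 1) - f j),
    sum_range_sub, sub_eq_self]
  exact unitOverlap_of_le_left (by simp)

lemma sum_rowSum_mul_le_sum_sum_mul_mul {ι : Type*} [Fintype ι] (L : Matrix ι ι ℝ)
    (z w : ι → ℝ) (hL : ∀ i j, 0 ≤ L i j) (hz : ∀ i, 0 ≤ z i)
    (hw : ∀ i j, L i j ≠ 0 → w i ≤ z j) :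
    ∑ i, (∑ j, L i j) * z i * w i ≤ ∑ i, ∑ j, L i j * z i * z j := by
  simp only [sum_mul]
  refine sum_le_sum fun i _ => sum_le_sum fun j _ => ?_
  by_cases h : L i j = 0
  · simp [h]
  · exact mul_le_mul_of_nonneg_left (hw i j h) (mul_nonneg (hL i j) (hz i))

lemma Zd_eq_harmonic (d : ℕ) : Zd d = (harmonic d : ℝ) := by
  rw [Zd, harmonic]; push_cast; rfl

lemma Zd_nonneg (d : ℕ) : 0 ≤ Zd d :=
  sum_nonneg fun i _ => by positivity

lemma Zd_pos {d : ℕ} (hd : 1 ≤ d) : 0 < Zd d :=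
  sum_pos (fun i _ => by positivity) (nonempty_range_iff.mpr (by omega))

lemma Zd_le_one_add_log (d : ℕ) : Zd d ≤ 1 + Real.log d := by
  rw [Zd_eq_harmonic]; exact harmonic_le_one_add_log d

lemma zvec_nonneg (d : ℕ) (i : Fin d) : 0 ≤ zvec d i := by
  unfold zvec; positivity

lemma mul_inv_sqrt_le_zvec {d : ℕ} {t : ℝ} (ht : 0 ≤ t) {i j : Fin d}
    (h : Lmat d t i j ≠ 0) :
    t * (√(Zd d))⁻¹ * (√((i : ℝ) + 1 + t ^ 2))⁻¹ ≤ zvec d j := by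
  have hij : ((j : ℝ) + 1) * t ^ 2 ≤ i + 1 + t ^ 2 := by
    by_contra! h'
    exact h (Lmat_eq_zero_of_le (by linarith))
  have hsqrt : t * √((j : ℝ) + 1) ≤ √((i : ℝ) + 1 + t ^ 2) := by
    rw [← Real.sqrt_sq ht, ← Real.sqrt_mul (sq_nonneg t), mul_comm, Real.sqrt_sq ht]
    exact Real.sqrt_le_sqrt hij
  have hinv : t * (√((i : ℝ) + 1 + t ^ 2))⁻¹ ≤ (√((j : ℝ) + 1))⁻¹ := by
    rw [← div_eq_mul_inv, div_le_iff₀ (by positivity), inv_mul_eq_div,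
      le_div_iff₀ (by positivity)]
    exact hsqrt
  calc t * (√(Zd d))⁻¹ * (√((i : ℝ) + 1 + t ^ 2))⁻¹
      = (√(Zd d))⁻¹ * (t * (√((i : ℝ) + 1 + t ^ 2))⁻¹) := by ring
    _ ≤ zvec d j := mul_le_mul_of_nonneg_left hinv (by positivity)

lemma inv_mul_inv_le_zvec_mul {d : ℕ} {t : ℝ} (ht : 0 ≤ t) (i : Fin d) :
    (Zd d)⁻¹ * t * ((i : ℝ) + 1 + t ^ 2)⁻¹ ≤
      zvec d i * (t * (√(Zd d))⁻¹ * (√((i : ℝ) + 1 + t ^ 2))⁻¹) := by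
  have hZ : (√(Zd d))⁻¹ * (√(Zd d))⁻¹ = (Zd d)⁻¹ := by
    rw [← mul_inv, Real.mul_self_sqrt (Zd_nonneg d)]
  have hsqrt : √((i : ℝ) + 1) * √((i : ℝ) + 1 + t ^ 2) ≤ (i : ℝ) + 1 + t ^ 2 := by
    rw [← Real.sqrt_mul (by positivity), Real.sqrt_le_left (by positivity)]
    nlinarith [sq_nonneg t]
  have hinv : ((i : ℝ) + 1 + t ^ 2)⁻¹ ≤ (√((i : ℝ) + 1))⁻¹ * (√((i : ℝ) + 1 + t ^ 2))⁻¹ := by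
    rw [← mul_inv]
    exact inv_anti₀ (by positivity) hsqrt
  calc (Zd d)⁻¹ * t * ((i : ℝ) + 1 + t ^ 2)⁻¹
      ≤ (Zd d)⁻¹ * t * ((√((i : ℝ) + 1))⁻¹ * (√((i : ℝ) + 1 + t ^ 2))⁻¹) :=
        mul_le_mul_of_nonneg_left hinv (mul_nonneg (inv_nonneg.mpr (Zd_nonneg d)) ht)
    _ = zvec d i * (t * (√(Zd d))⁻¹ * (√((i : ℝ) + 1 + t ^ 2))⁻¹) := by
      rw [zvec, ← hZ]; ring

lemma sum_range_inv_le_Lmat_bilinear (d : ℕ) {t : ℝ} (ht : 0 ≤ t) :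
    (Zd d)⁻¹ * t * ∑ i ∈ range (min d ⌊d * t ^ 2⌋₊), ((i : ℝ) + (1 + t ^ 2))⁻¹ ≤
      ∑ i, ∑ j, Lmat d t i j * zvec d i * zvec d j := by
  set f : ℕ → ℝ := fun i => (Zd d)⁻¹ * t * ((i : ℝ) + 1 + t ^ 2)⁻¹
  have hf : ∀ i, 0 ≤ f i := fun i =>
    mul_nonneg (mul_nonneg (inv_nonneg.mpr (Zd_nonneg d)) ht) (by positivity)
  have hfull : ∀ i ∈ range (min d ⌊d * t ^ 2⌋₊), unitOverlap i (d * t ^ 2) = 1 := by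
    intro i hi
    refine unitOverlap_of_le ?_
    have : i + 1 ≤ ⌊d * t ^ 2⌋₊ := by have := mem_range.mp hi; omega
    exact_mod_cast (Nat.le_floor_iff (by positivity)).mp this
  calc (Zd d)⁻¹ * t * ∑ i ∈ range (min d ⌊d * t ^ 2⌋₊), ((i : ℝ) + (1 + t ^ 2))⁻¹
      = ∑ i ∈ range (min d ⌊d * t ^ 2⌋₊), unitOverlap i (d * t ^ 2) * f i := by
        rw [mul_sum]
        refine sum_congr rfl fun i hi => ?_
        rw [hfull i hi, one_mul, ← add_assoc]
    _ ≤ ∑ i ∈ range d, unitOverlap i (d * t ^ 2) * f i :=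
        sum_le_sum_of_subset_of_nonneg (range_subset_range.mpr (min_le_left _ _))
          fun i _ _ => mul_nonneg (unitOverlap_nonneg _ _) (hf i)
    _ = ∑ i : Fin d, unitOverlap i (d * t ^ 2) * f i :=
        (Fin.sum_univ_eq_sum_range (fun i => unitOverlap i (d * t ^ 2) * f i) d).symm
    _ ≤ ∑ i : Fin d, (∑ j, Lmat d t i j) * zvec d i *
          (t * (√(Zd d))⁻¹ * (√((i : ℝ) + 1 + t ^ 2))⁻¹) := by
        refine sum_le_sum fun i _ => ?_
        rw [sum_Lmat_row, mul_assoc]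
        exact mul_le_mul_of_nonneg_left (inv_mul_inv_le_zvec_mul ht i) (unitOverlap_nonneg _ _)
    _ ≤ ∑ i, ∑ j, Lmat d t i j * zvec d i * zvec d j :=
        sum_rowSum_mul_le_sum_sum_mul_mul _ _ _ (Lmat_nonneg d t) (zvec_nonneg d)
          fun _ _ h => mul_inv_sqrt_le_zvec ht h

lemma log_div_le_sum_range_inv {a : ℝ} (ha : 0 < a) (k : ℕ) :
    Real.log ((k + a) / a) ≤ ∑ i ∈ range k, ((i : ℝ) + a)⁻¹ := by
  induction k with
  | zero => simp [ha.ne']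
  | succ k ih =>
    have hka : 0 < (k : ℝ) + a := by positivity
    have hsplit : Real.log (((k + 1 : ℕ) + a) / a) =
        Real.log ((k + a) / a) + Real.log ((k + 1 + a) / (k + a)) := by
      rw [← Real.log_mul (by positivity) (by positivity)]
      congr 1
      field_simp
      push_cast
      ring
    have hstep : Real.log ((k + 1 + a) / (k + a)) ≤ ((k : ℝ) + a)⁻¹ := by
      refine (Real.log_le_sub_one_of_pos (by positivity)).trans_eq ?_
      field_simp
      ring
    rw [sum_range_succ, hsplit]
    linarith

lemma natCast_div_le_min_floor_add_div {d : ℕ} {t : ℝ} (ht : 0 < t) :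
    (d : ℝ) / (2 * max t t⁻¹ ^ 2) ≤
      ((min d ⌊d * t ^ 2⌋₊ : ℕ) + (1 + t ^ 2)) / (1 + t ^ 2) := by
  rcases le_total 1 t with h1 | h1
  · have hmax : max t t⁻¹ = t := max_eq_left ((inv_le_one_of_one_le₀ h1).trans h1)
    have hk : min d ⌊d * t ^ 2⌋₊ = d := min_eq_left <| Nat.le_floor <| by
      nlinarith [one_le_pow₀ (n := 2) h1, Nat.cast_nonneg (α := ℝ) d]
    rw [hmax, hk, div_le_div_iff₀ (by positivity) (by positivity)]
    nlinarith [one_le_pow₀ (n := 2) h1, Nat.cast_nonneg (α := ℝ) d]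
  · have hmax : max t t⁻¹ = t⁻¹ := max_eq_right (h1.trans (one_le_inv₀ ht |>.mpr h1))
    have hfloor : ⌊d * t ^ 2⌋₊ ≤ d := Nat.floor_le_of_le (by
      nlinarith [pow_le_one₀ ht.le h1 (n := 2), Nat.cast_nonneg (α := ℝ) d])
    have hk : (d : ℝ) * t ^ 2 < ⌊d * t ^ 2⌋₊ + 1 := Nat.lt_floor_add_one _
    have hlhs : (d : ℝ) / (2 * t⁻¹ ^ 2) = d * t ^ 2 / 2 := by field_simp
    rw [hmax, min_eq_right hfloor, hlhs, div_le_div_iff₀ (by norm_num) (by positivity)]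
    nlinarith [pow_le_one₀ ht.le h1 (n := 2), sq_nonneg t]

lemma one_add_log_two_add_two_mul_log_le {μ : ℝ} (hμ : 1 ≤ μ) :
    1 + Real.log 2 + 2 * Real.log μ ≤ 5 * Real.log (1 + μ) := by
  have h1 : Real.log μ ≤ Real.log (1 + μ) := Real.log_le_log (by linarith) (by linarith)
  have h2 : Real.log 2 ≤ Real.log (1 + μ) := Real.log_le_log (by norm_num) (by linarith)
  linarith [Real.log_two_gt_d9]

lemma one_add_log_sub_le_log_div {d : ℕ} (hd : 1 ≤ d) {t : ℝ} (ht : 0 < t) :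
    1 + Real.log d - 5 * Real.log (1 + max t t⁻¹) ≤
      Real.log (((min d ⌊d * t ^ 2⌋₊ : ℕ) + (1 + t ^ 2)) / (1 + t ^ 2)) := by
  have hμ : 1 ≤ max t t⁻¹ := by
    rcases le_total 1 t with h | h
    · exact h.trans (le_max_left _ _)
    · exact ((one_le_inv₀ ht).mpr h).trans (le_max_right _ _)
  have hd' : (0 : ℝ) < d := by exact_mod_cast hd
  have hlog := Real.log_le_log (by positivity) (natCast_div_le_min_floor_add_div (d := d) ht)
  rw [Real.log_div hd'.ne' (by positivity), Real.log_mul two_ne_zero (by positivity),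
    Real.log_pow] at hlog
  linarith [one_add_log_two_add_two_mul_log_le hμ]

theorem lmat_bilinear_lower_bound :
    ∃ C : ℝ, 0 < C ∧ ∀ (d : ℕ) (t : ℝ), 1 ≤ d → 0 < t →
      t * (1 - C * Real.log (1 + max t t⁻¹) / (1 + Real.log d)) ≤
        ∑ i, ∑ j, Lmat d t i j * zvec d i * zvec d j := by
  refine ⟨5, by norm_num, fun d t hd ht => ?_⟩
  set k := min d ⌊d * t ^ 2⌋₊
  set A := Real.log ((k + (1 + t ^ 2)) / (1 + t ^ 2))
  have hD : 0 < 1 + Real.log d := by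
    have := Real.log_nonneg (Nat.one_le_cast.mpr hd : (1 : ℝ) ≤ d); linarith
  have hA : 0 ≤ A := Real.log_nonneg ((one_le_div (by positivity)).mpr (by simp))
  calc t * (1 - 5 * Real.log (1 + max t t⁻¹) / (1 + Real.log d))
      = t * (1 + Real.log d - 5 * Real.log (1 + max t t⁻¹)) / (1 + Real.log d) := by
        field_simp
    _ ≤ t * A / (1 + Real.log d) := by gcongr; exact one_add_log_sub_le_log_div hd ht
    _ ≤ t * A / Zd d := by gcongr; exacts [Zd_pos hd, Zd_le_one_add_log d]
    _ ≤ (Zd d)⁻¹ * t * ∑ i ∈ range k, ((i : ℝ) + (1 + t ^ 2))⁻¹ := by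
        rw [div_eq_inv_mul, ← mul_assoc]
        gcongr
        · exact mul_nonneg (inv_nonneg.mpr (Zd_nonneg d)) ht.le
        · exact log_div_le_sum_range_inv (by positivity) k
    _ ≤ ∑ i, ∑ j, Lmat d t i j * zvec d i * zvec d j := sum_range_inv_le_Lmat_bilinear d ht.le
end

section
/- For any n ≥ 1 and any finite sequence (x_i) of n×n complex matrices, ‖∑_i x_i* x_i‖ ≤ n ‖∑_i x_i x_i*‖, where ‖·‖ is the operator norm. Consequently η(M_n) ≤ √n, where η(M_n) is the maximum over the two suprema: sup over (x_i) with ‖∑ x_i* x_i‖ ≤ 1 of ‖∑ x_i x_i*‖^{1/2}, and the symmetric quantity with the roles of x_i x_i* and x_i* x_i exchanged. -/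
/-!
For positive semidefinite `A ∈ Mₙ` one has `‖A‖ ≤ Tr A ≤ n ‖A‖`: in the C⋆-algebra `Mₙ` the norm
of a positive element lies in its spectrum, so it is one of the nonnegative eigenvalues whose sum
is the trace, and each diagonal entry is bounded by the norm. Since `Tr (x* x) = Tr (x x*)`,
`‖∑ xᵢ* xᵢ‖ ≤ Tr (∑ xᵢ* xᵢ) = Tr (∑ xᵢ xᵢ*) ≤ n ‖∑ xᵢ xᵢ*‖`.
-/

open Matrix
open scoped MatrixOrder ComplexOrder Matrix.Norms.L2Operator

namespace Matrix

variable {𝕜 m n ι : Type*} [RCLike 𝕜] [Fintype m] [Fintype n] [DecidableEq n]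

lemma norm_apply_le_l2_opNorm (A : Matrix m n 𝕜) (i : m) (j : n) : ‖A i j‖ ≤ ‖A‖ :=
  calc ‖A i j‖ = ‖(EuclideanSpace.equiv m 𝕜).symm (A *ᵥ EuclideanSpace.single j 1) i‖ := by
        simp
    _ ≤ ‖(EuclideanSpace.equiv m 𝕜).symm (A *ᵥ EuclideanSpace.single j 1)‖ :=
        PiLp.norm_apply_le _ i
    _ ≤ ‖A‖ := (A.l2_opNorm_mulVec _).trans_eq <| by
        rw [PiLp.norm_single, norm_one, mul_one]

lemma re_trace_le_card_mul_l2_opNorm (A : Matrix n n 𝕜) :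
    RCLike.re A.trace ≤ Fintype.card n * ‖A‖ :=
  calc RCLike.re A.trace ≤ ‖A.trace‖ := RCLike.re_le_norm _
    _ ≤ ∑ i, ‖A i i‖ := norm_sum_le _ _
    _ ≤ ∑ _i : n, ‖A‖ := Finset.sum_le_sum fun i _ => A.norm_apply_le_l2_opNorm i i
    _ = Fintype.card n * ‖A‖ := by simp

lemma PosSemidef.l2_opNorm_le_re_trace {A : Matrix n n ℂ} (hA : A.PosSemidef) :
    ‖A‖ ≤ A.trace.re := by
  cases isEmpty_or_nonempty n
  · simp [Subsingleton.elim A 0]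
  obtain ⟨i, hi⟩ : ‖A‖ ∈ Set.range hA.isHermitian.eigenvalues := by
    rw [← hA.isHermitian.spectrum_real_eq_range_eigenvalues]
    exact CStarAlgebra.norm_mem_spectrum_of_nonneg (nonneg_iff_posSemidef.mpr hA)
  rw [← hi, hA.isHermitian.trace_eq_sum_eigenvalues, Complex.re_sum]
  simp only [Complex.coe_algebraMap, Complex.ofReal_re]
  exact Finset.single_le_sum (fun j _ => hA.eigenvalues_nonneg j) (Finset.mem_univ i)

lemma l2_opNorm_sum_conjTranspose_mul_self_le [Fintype ι] (x : ι → Matrix n n ℂ) :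
    ‖∑ i, (x i)ᴴ * x i‖ ≤ Fintype.card n * ‖∑ i, x i * (x i)ᴴ‖ :=
  calc ‖∑ i, (x i)ᴴ * x i‖ ≤ (∑ i, (x i)ᴴ * x i).trace.re :=
        (posSemidef_sum _ fun i _ => posSemidef_conjTranspose_mul_self (x i)).l2_opNorm_le_re_trace
    _ = (∑ i, x i * (x i)ᴴ).trace.re := by simp only [trace_sum, trace_mul_comm (x _)ᴴ]
    _ ≤ Fintype.card n * ‖∑ i, x i * (x i)ᴴ‖ :=
        re_trace_le_card_mul_l2_opNorm (∑ i, x i * (x i)ᴴ)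

end Matrix

theorem eta_Mn_le_sqrt_general (n : ℕ) (ι : Type) [Fintype ι] :
    (∀ x : ι → Matrix (Fin n) (Fin n) ℂ,
      ‖Matrix.toEuclideanCLM (𝕜 := ℂ) (∑ i, (x i)ᴴ * x i)‖ ≤
        n * ‖Matrix.toEuclideanCLM (𝕜 := ℂ) (∑ i, x i * (x i)ᴴ)‖) ∧
    (∀ x : ι → Matrix (Fin n) (Fin n) ℂ,
      ‖Matrix.toEuclideanCLM (𝕜 := ℂ) (∑ i, (x i)ᴴ * x i)‖ ≤ 1 →
        Real.sqrt ‖Matrix.toEuclideanCLM (𝕜 := ℂ) (∑ i, x i * (x i)ᴴ)‖ ≤ Real.sqrt n) ∧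
    (∀ x : ι → Matrix (Fin n) (Fin n) ℂ,
      ‖Matrix.toEuclideanCLM (𝕜 := ℂ) (∑ i, x i * (x i)ᴴ)‖ ≤ 1 →
        Real.sqrt ‖Matrix.toEuclideanCLM (𝕜 := ℂ) (∑ i, (x i)ᴴ * x i)‖ ≤ Real.sqrt n) := by
  simp only [l2_opNorm_toEuclideanCLM]
  have sum_star_mul_le (x : ι → Matrix (Fin n) (Fin n) ℂ) :
      ‖∑ i, (x i)ᴴ * x i‖ ≤ n * ‖∑ i, x i * (x i)ᴴ‖ := by
    simpa using l2_opNorm_sum_conjTranspose_mul_self_le x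
  have sqrt_le {a b : ℝ} (hab : a ≤ n * b) (hb : b ≤ 1) : √a ≤ √n :=
    Real.sqrt_le_sqrt (hab.trans (mul_le_of_le_one_right n.cast_nonneg hb))
  refine ⟨sum_star_mul_le, fun x hx => sqrt_le ?_ hx, fun x hx => sqrt_le (sum_star_mul_le x) hx⟩
  simpa using sum_star_mul_le fun i => (x i)ᴴ

theorem eta_Mn_le_sqrt (n : ℕ) (hn : 1 ≤ n) (ι : Type) [Fintype ι] :
    (∀ x : ι → Matrix (Fin n) (Fin n) ℂ,
      ‖Matrix.toEuclideanCLM (𝕜 := ℂ) (∑ i, (x i)ᴴ * x i)‖ ≤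
        n * ‖Matrix.toEuclideanCLM (𝕜 := ℂ) (∑ i, x i * (x i)ᴴ)‖) ∧
    (∀ x : ι → Matrix (Fin n) (Fin n) ℂ,
      ‖Matrix.toEuclideanCLM (𝕜 := ℂ) (∑ i, (x i)ᴴ * x i)‖ ≤ 1 →
        Real.sqrt ‖Matrix.toEuclideanCLM (𝕜 := ℂ) (∑ i, x i * (x i)ᴴ)‖ ≤ Real.sqrt n) ∧
    (∀ x : ι → Matrix (Fin n) (Fin n) ℂ,
      ‖Matrix.toEuclideanCLM (𝕜 := ℂ) (∑ i, x i * (x i)ᴴ)‖ ≤ 1 →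
        Real.sqrt ‖Matrix.toEuclideanCLM (𝕜 := ℂ) (∑ i, (x i)ᴴ * x i)‖ ≤ Real.sqrt n) :=
  eta_Mn_le_sqrt_general n ι
end

section
/- There exists a universal constant C > 0 such that for all integers d ≥ 1 and reals t > 0, ln(2d·min(1,t²) + (1+t)²) − 2 ln(1+t) ≥ (1 + ln d)(1 − C · ln(1 + max(t, t⁻¹))/(1 + ln d)), i.e., (1 + ln d) − (ln(2d·min(1,t²) + (1+t)²) − 2 ln(1+t)) ≤ C · ln(1 + max(t, t⁻¹)). -/
theorem log_lower_bound_uniform :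
    ∃ C : ℝ, 0 < C ∧ ∀ (d : ℕ) (t : ℝ), 1 ≤ d → 0 < t →
      (1 + Real.log d) -
          (Real.log (2 * d * min 1 (t ^ 2) + (1 + t) ^ 2) - 2 * Real.log (1 + t)) ≤
        C * Real.log (1 + max t t⁻¹) := by
  refine ⟨5, by norm_num, fun d t hd ht => ?_⟩
  have hd1 : (1:ℝ) ≤ (d:ℝ) := by exact_mod_cast hd
  have hd0 : (0:ℝ) < (d:ℝ) := by linarith
  have hlog2 := Real.log_two_gt_d9
  have hlogd : 0 ≤ Real.log d := Real.log_nonneg hd1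
  rcases le_or_gt 1 t with h1 | h1
  · have hmin : min 1 (t ^ 2) = 1 := min_eq_left (by nlinarith)
    have hmax : max t t⁻¹ = t := max_eq_left (by
      calc t⁻¹ ≤ 1 := inv_le_one_of_one_le₀ h1
        _ ≤ t := h1)
    rw [hmin, hmax]
    have h2d : Real.log (2 * d) ≤ Real.log (2 * d * 1 + (1 + t) ^ 2) :=
      Real.log_le_log (by positivity) (by nlinarith)
    have hlog2d : Real.log (2 * (d:ℝ)) = Real.log 2 + Real.log d :=
      Real.log_mul (by norm_num) (ne_of_gt hd0)
    have hlt : Real.log 2 ≤ Real.log (1 + t) :=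
      Real.log_le_log (by norm_num) (by linarith)
    linarith
  · have hmin : min 1 (t ^ 2) = t ^ 2 := min_eq_right (by nlinarith)
    have hti : 1 ≤ t⁻¹ := (one_le_inv₀ ht).2 h1.le
    have hmax : max t t⁻¹ = t⁻¹ := max_eq_right (by linarith)
    rw [hmin, hmax]
    have hA : Real.log (2 * d * t ^ 2) ≤ Real.log (2 * d * t ^ 2 + (1 + t) ^ 2) :=
      Real.log_le_log (by positivity) (by nlinarith)
    have hA' : Real.log (2 * (d:ℝ) * t ^ 2) = Real.log 2 + Real.log d + 2 * Real.log t := by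
      rw [Real.log_mul (by positivity) (by positivity),
        Real.log_mul (by norm_num) (ne_of_gt hd0), Real.log_pow]
      push_cast; ring
    have hB : Real.log (1 + t) ≤ Real.log 2 :=
      Real.log_le_log (by linarith) (by linarith)
    have hC : Real.log 2 ≤ Real.log (1 + t⁻¹) :=
      Real.log_le_log (by norm_num) (by linarith)
    have hD : Real.log t⁻¹ ≤ Real.log (1 + t⁻¹) :=
      Real.log_le_log (by positivity) (by linarith)
    rw [Real.log_inv] at hD
    linarith
end
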